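/- arXiv:1803.10839 — 4 statements merged into one kernel-verified Lean document; each statement's English description precedes it below -/
import Mathlib

section
/- Let n ≥ 2, p ∈ ℝ, and let K ⊂ ℝ^n be a convex body containing the origin in its interior. If μ is a finite Borel measure on S^{n−1} equal to J_p(K,·) in the sense that μ({u}) = ρ_K(u)^p · H^{n−1}(α_K({u})) for every u ∈ S^{n−1} and μ(ω) ≥ the corresponding integral on every Borel ω (in particular μ(ω) = 0 forces H^{n−1}(α_K(ω)) = 0), then μ is not concentrated on any great subsphere: for every proper linear subspace W ⊂ ℝ^n one has H^{n−1}(α_K(S^{n−1} \ W)) > 0, hence μ(S^{n−1} \ W) > 0. -/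
open MeasureTheory Real Filter
open scoped InnerProductSpace ENNReal Topology Pointwise

noncomputable section

abbrev E (n : ℕ) := EuclideanSpace ℝ (Fin n)

def sph (n : ℕ) : Set (E n) := Metric.sphere 0 1

def suppFn {n : ℕ} (K : Set (E n)) (v : E n) : ℝ := sSup ((fun x => ⟪x, v⟫_ℝ) '' K)

def radFn {n : ℕ} (K : Set (E n)) (u : E n) : ℝ := sSup {r : ℝ | 0 ≤ r ∧ r • u ∈ K}

def rgi {n : ℕ} (K ω : Set (E n)) : Set (E n) :=
  {v | v ∈ sph n ∧ ∃ u ∈ ω, ⟪v, radFn K u • u⟫_ℝ = suppFn K v}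

def hm (n : ℕ) : Measure (E n) := μH[(n : ℝ) - 1]

def entropy {n : ℕ} (Q : Set (E n)) : ℝ := -∫ v in sph n, Real.log (suppFn Q v) ∂(hm n)

def ballVol (m : ℕ) : ℝ := (volume (Metric.ball (0 : E m) 1)).toReal

def Phi {n N : ℕ} (p : ℝ) (u : Fin N → E n) (w : Fin N → ℝ) (Q : Set (E n)) : ℝ :=
  (1 / (n * ballVol n)) * entropy Q
    - (1 / p) * Real.log (2 * ∑ i, radFn Q (u i) ^ (-p) * w i)

def Dmu {n N : ℕ} (u : Fin N → E n) : Set (Set (E n)) :=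
  {Q | ∃ ρ : Fin N → ℝ, (∀ i, 0 < ρ i) ∧
    Q = convexHull ℝ (⋃ i, ({ρ i • u i, -(ρ i • u i)} : Set (E n)))}

/-!
Pick a unit vector `w ⟂ W`. For `v` on the sphere near `w`, a maximizer `x` of `⟪·, v⟫` on `K`
cannot lie in `W`: its value is at least the inradius `r` of `K` about the origin, while on `W`
the functional `⟪·, v⟫ = ⟪·, v - w⟫` is at most `R ‖v - w‖` on `K ⊆ B(0, R)`. The boundary point
of `K` on the ray through `x` attains the same support value, so `v` lies in the radial Gauss
image of the directions off `W`. That image therefore contains a spherical cap around `w`, whose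
`(n - 1)`-dimensional Hausdorff measure is positive since the orthogonal projection onto `w^⟂`
is `1`-Lipschitz and maps the cap onto a ball. The hypothesis on `μ` transfers positivity to `μ`.
-/

lemma hausdorffMeasure_pos_of_ball_subset_image {X V : Type*} [EMetricSpace X]
    [MeasurableSpace X] [BorelSpace X] [NormedAddCommGroup V] [NormedSpace ℝ V]
    [FiniteDimensional ℝ V] [MeasurableSpace V] [BorelSpace V] {f : X → V} {L : NNReal}
    (hf : LipschitzWith L f) {s : Set X} {y : V} {δ : ℝ} (hδ : 0 < δ)
    (hball : Metric.ball y δ ⊆ f '' s) : 0 < μH[Module.finrank ℝ V] s := by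
  have hball_pos : 0 < μH[Module.finrank ℝ V] (Metric.ball y δ) :=
    Metric.measure_ball_pos _ _ hδ
  have himage := hf.hausdorffMeasure_image_le (Nat.cast_nonneg (Module.finrank ℝ V)) s
  refine pos_iff_ne_zero.2 fun hs => hball_pos.ne' ?_
  exact le_antisymm ((measure_mono hball).trans (by simpa [hs] using himage)) bot_le

section SphericalCap

variable {F : Type*} [NormedAddCommGroup F] [InnerProductSpace ℝ F]

lemma norm_sqrt_smul_add_eq_one {w y : F} (hw : ‖w‖ = 1) (hwy : ⟪w, y⟫_ℝ = 0) (hy : ‖y‖ ≤ 1) :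
    ‖√(1 - ‖y‖ ^ 2) • w + y‖ = 1 := by
  have h := norm_add_sq_eq_norm_sq_add_norm_sq_real (x := √(1 - ‖y‖ ^ 2) • w) (y := y)
    (by rw [real_inner_smul_left, hwy, mul_zero])
  have hs : √(1 - ‖y‖ ^ 2) ^ 2 = 1 - ‖y‖ ^ 2 := Real.sq_sqrt (by nlinarith [norm_nonneg y])
  rw [norm_smul, hw, mul_one, Real.norm_eq_abs, abs_of_nonneg (Real.sqrt_nonneg _)] at h
  nlinarith [norm_nonneg (√(1 - ‖y‖ ^ 2) • w + y)]

lemma norm_sqrt_smul_add_sub_le {w y : F} (hw : ‖w‖ = 1) (hy : ‖y‖ ≤ 1) :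
    ‖√(1 - ‖y‖ ^ 2) • w + y - w‖ ≤ 2 * ‖y‖ := by
  have hs : √(1 - ‖y‖ ^ 2) ^ 2 = 1 - ‖y‖ ^ 2 := Real.sq_sqrt (by nlinarith [norm_nonneg y])
  have hs1 : √(1 - ‖y‖ ^ 2) ≤ 1 := Real.sqrt_le_one.mpr (by nlinarith [norm_nonneg y])
  have hs0 : 1 - ‖y‖ ≤ √(1 - ‖y‖ ^ 2) := by
    nlinarith [norm_nonneg y, Real.sqrt_nonneg (1 - ‖y‖ ^ 2)]
  calc ‖√(1 - ‖y‖ ^ 2) • w + y - w‖ = ‖(√(1 - ‖y‖ ^ 2) - 1) • w + y‖ := by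
        rw [sub_smul, one_smul, sub_add_eq_add_sub]
    _ ≤ ‖(√(1 - ‖y‖ ^ 2) - 1) • w‖ + ‖y‖ := norm_add_le _ _
    _ ≤ 2 * ‖y‖ := by
        rw [norm_smul, hw, mul_one, Real.norm_eq_abs, abs_of_nonpos (by linarith)]
        linarith

lemma ball_subset_orthogonalProjectionOnto_image_sphere_inter_ball {w : F} (hw : ‖w‖ = 1)
    (ε : ℝ) : Metric.ball 0 (min 1 (ε / 2)) ⊆
      (ℝ ∙ w)ᗮ.orthogonalProjectionOnto '' (Metric.sphere 0 1 ∩ Metric.ball w ε) := by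
  intro y hy
  rw [mem_ball_zero_iff, lt_min_iff] at hy
  have hwy : ⟪w, (y : F)⟫_ℝ = 0 :=
    (Submodule.mem_orthogonal _ _).1 y.2 w (Submodule.mem_span_singleton_self w)
  have hy1 : ‖(y : F)‖ ≤ 1 := hy.1.le
  refine ⟨√(1 - ‖(y : F)‖ ^ 2) • w + y, ⟨?_, ?_⟩, ?_⟩
  · rw [mem_sphere_zero_iff_norm]
    exact norm_sqrt_smul_add_eq_one hw hwy hy1
  · rw [Metric.mem_ball, dist_eq_norm]
    have := norm_sqrt_smul_add_sub_le hw hy1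
    have hyε : ‖(y : F)‖ < ε / 2 := hy.2
    linarith
  · rw [map_add, _root_.map_smul,
      Submodule.orthogonalProjectionOnto_orthogonalComplement_singleton_eq_zero,
      Submodule.orthogonalProjectionOnto_mem_subspace_eq_self, smul_zero, zero_add]

lemma hausdorffMeasure_sphere_inter_ball_pos [FiniteDimensional ℝ F] [MeasurableSpace F]
    [BorelSpace F] {w : F} (hw : ‖w‖ = 1) {ε : ℝ} (hε : 0 < ε) :
    0 < μH[(Module.finrank ℝ F : ℝ) - 1] (Metric.sphere 0 1 ∩ Metric.ball w ε) := by
  have hw0 : w ≠ 0 := norm_ne_zero_iff.1 (hw ▸ one_ne_zero)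
  have hrank : Module.finrank ℝ (ℝ ∙ w)ᗮ + 1 = Module.finrank ℝ F := by
    rw [← finrank_span_singleton (K := ℝ) hw0, add_comm]
    exact Submodule.finrank_add_finrank_orthogonal _
  rw [← hrank, Nat.cast_add, Nat.cast_one, add_sub_cancel_right]
  exact hausdorffMeasure_pos_of_ball_subset_image (ContinuousLinearMap.lipschitz _)
    (lt_min one_pos (half_pos hε))
    (ball_subset_orthogonalProjectionOnto_image_sphere_inter_ball hw ε)

lemma Submodule.exists_norm_eq_one_mem_orthogonal [FiniteDimensional ℝ F] {W : Submodule ℝ F}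
    (hW : W ≠ ⊤) : ∃ w ∈ Wᗮ, ‖w‖ = 1 := by
  obtain ⟨x, hx, hx0⟩ := Submodule.exists_mem_ne_zero_of_ne_bot
    (mt Submodule.orthogonal_eq_bot_iff.1 hW)
  exact ⟨‖x‖⁻¹ • x, Wᗮ.smul_mem _ hx, norm_smul_inv_norm hx0⟩

end SphericalCap

section ConvexBody

variable {n : ℕ} {K : Set (E n)}

lemma suppFn_eq_of_isMaxOn {v x₀ : E n} (hx₀ : x₀ ∈ K)
    (hmax : IsMaxOn (fun x => ⟪x, v⟫_ℝ) K x₀) : suppFn K v = ⟪x₀, v⟫_ℝ :=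
  IsGreatest.csSup_eq ⟨⟨x₀, hx₀, rfl⟩, by rintro _ ⟨x, hx, rfl⟩; exact hmax hx⟩

lemma isCompact_setOf_smul_mem (hK : IsCompact K) {u : E n} (hu : u ≠ 0) :
    IsCompact {r : ℝ | 0 ≤ r ∧ r • u ∈ K} :=
  ((isClosedEmbedding_smul_left hu).isCompact_preimage hK).inter_left isClosed_Ici

lemma le_radFn (hK : IsCompact K) {u : E n} (hu : u ≠ 0) {r : ℝ} (hr : 0 ≤ r)
    (hru : r • u ∈ K) : r ≤ radFn K u :=
  le_csSup (isCompact_setOf_smul_mem hK hu).bddAbove ⟨hr, hru⟩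

lemma radFn_smul_mem (hK : IsCompact K) (h0 : 0 ∈ K) {u : E n} (hu : u ≠ 0) :
    radFn K u • u ∈ K :=
  ((isCompact_setOf_smul_mem hK hu).sSup_mem ⟨0, le_rfl, by rwa [zero_smul]⟩).2

lemma mem_rgi_of_isMaxOn (hK : IsCompact K) (h0 : 0 ∈ K) {ω : Set (E n)} {v x₀ : E n}
    (hv : v ∈ sph n) (hx₀ : x₀ ∈ K) (hmax : IsMaxOn (fun x => ⟪x, v⟫_ℝ) K x₀) (hx₀0 : x₀ ≠ 0)
    (hω : ‖x₀‖⁻¹ • x₀ ∈ ω) : v ∈ rgi K ω := by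
  set u := ‖x₀‖⁻¹ • x₀
  have hnorm : 0 < ‖x₀‖ := norm_pos_iff.2 hx₀0
  have hu : u ≠ 0 := smul_ne_zero (inv_ne_zero hnorm.ne') hx₀0
  have hxu : ‖x₀‖ • u = x₀ := by simp only [u, smul_smul, mul_inv_cancel₀ hnorm.ne', one_smul]
  have hρ : ‖x₀‖ ≤ radFn K u := le_radFn hK hu hnorm.le (by rwa [hxu])
  have hupper : ⟪radFn K u • u, v⟫_ℝ ≤ ⟪x₀, v⟫_ℝ := hmax (radFn_smul_mem hK h0 hu)
  have hlower : ⟪x₀, v⟫_ℝ ≤ ⟪radFn K u • u, v⟫_ℝ := by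
    have hx₀v : 0 ≤ ⟪x₀, v⟫_ℝ := by simpa using hmax h0
    have hratio : 1 ≤ radFn K u * ‖x₀‖⁻¹ := by rwa [← div_eq_mul_inv, one_le_div hnorm]
    calc ⟪x₀, v⟫_ℝ ≤ (radFn K u * ‖x₀‖⁻¹) * ⟪x₀, v⟫_ℝ := le_mul_of_one_le_left hx₀v hratio
      _ = ⟪radFn K u • u, v⟫_ℝ := by simp only [u, smul_smul, real_inner_smul_left]
  refine ⟨hv, u, hω, ?_⟩
  rw [real_inner_comm, suppFn_eq_of_isMaxOn hx₀ hmax]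
  exact le_antisymm hupper hlower

lemma notMem_of_isMaxOn_of_mem_orthogonal {W : Submodule ℝ (E n)} {r R : ℝ}
    (hball : Metric.ball 0 r ⊆ K) (hR : ∀ x ∈ K, ‖x‖ ≤ R) {v w x₀ : E n} (hv : ‖v‖ = 1)
    (hw : w ∈ Wᗮ) (hvw : R * ‖v - w‖ < r) (hx₀ : x₀ ∈ K)
    (hmax : IsMaxOn (fun x => ⟪x, v⟫_ℝ) K x₀) : x₀ ∉ W := by
  intro hx₀W
  have hR0 : 0 ≤ R := (norm_nonneg x₀).trans (hR x₀ hx₀)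
  have hRvw : 0 ≤ R * ‖v - w‖ := by positivity
  set t := (R * ‖v - w‖ + r) / 2 with ht
  have ht0 : 0 ≤ t := by linarith
  have htv : t • v ∈ K := by
    apply hball
    rw [mem_ball_zero_iff, norm_smul, hv, mul_one, Real.norm_of_nonneg ht0]
    linarith
  have hx₀w : ⟪x₀, w⟫_ℝ = 0 := (Submodule.mem_orthogonal _ _).1 hw x₀ hx₀W
  have : t ≤ R * ‖v - w‖ :=
    calc t = ⟪t • v, v⟫_ℝ := by rw [real_inner_smul_left, real_inner_self_eq_norm_sq, hv]; ring
      _ ≤ ⟪x₀, v⟫_ℝ := hmax htv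
      _ = ⟪x₀, v - w⟫_ℝ := by rw [inner_sub_right, hx₀w, sub_zero]
      _ ≤ ‖x₀‖ * ‖v - w‖ := real_inner_le_norm _ _
      _ ≤ R * ‖v - w‖ := by gcongr; exact hR x₀ hx₀
  linarith

lemma sph_inter_ball_subset_rgi_sph_diff (hK : IsCompact K) (h0 : 0 ∈ K)
    {W : Submodule ℝ (E n)} {r R ε : ℝ} (hball : Metric.ball 0 r ⊆ K)
    (hR : ∀ x ∈ K, ‖x‖ ≤ R) (hε : R * ε < r) {w : E n} (hw : w ∈ Wᗮ) :
    sph n ∩ Metric.ball w ε ⊆ rgi K (sph n \ W) := by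
  rintro v ⟨hv, hvw⟩
  have hv1 : ‖v‖ = 1 := mem_sphere_zero_iff_norm.1 hv
  obtain ⟨x₀, hx₀, hmax⟩ := hK.exists_isMaxOn ⟨0, h0⟩
    (by fun_prop : Continuous fun x : E n => ⟪x, v⟫_ℝ).continuousOn
  have hR0 : 0 ≤ R := (norm_nonneg _).trans (hR 0 h0)
  have hx₀W : x₀ ∉ W := notMem_of_isMaxOn_of_mem_orthogonal hball hR hv1 hw
    (lt_of_le_of_lt (by gcongr; exact (mem_ball_iff_norm.1 hvw).le) hε) hx₀ hmax
  have hx₀0 : x₀ ≠ 0 := fun h => hx₀W (h ▸ W.zero_mem)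
  refine mem_rgi_of_isMaxOn hK h0 hv hx₀ hmax hx₀0 ⟨?_, fun h => hx₀W ?_⟩
  · rw [sph, mem_sphere_zero_iff_norm, norm_smul, norm_inv, norm_norm,
      inv_mul_cancel₀ (norm_ne_zero_iff.2 hx₀0)]
  · simpa [smul_smul, mul_inv_cancel₀ (norm_ne_zero_iff.2 hx₀0)] using W.smul_mem ‖x₀‖ h

end ConvexBody

theorem lp_aleksandrov_not_concentrated_general {n : ℕ} (K : Set (E n)) (hKcomp : IsCompact K)
    (h0 : 0 ∈ interior K) (μ : Measure (E n))
    (h2 : ∀ ω : Set (E n), MeasurableSet ω → μ ω = 0 → hm n (rgi K ω) = 0) :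
    ∀ W : Submodule ℝ (E n), W ≠ ⊤ →
      0 < hm n (rgi K (sph n \ (W : Set (E n)))) ∧ 0 < μ (sph n \ (W : Set (E n))) := by
  intro W hW
  obtain ⟨r, hr, hball⟩ := Metric.mem_nhds_iff.1 (mem_interior_iff_mem_nhds.1 h0)
  obtain ⟨R, hR⟩ := hKcomp.isBounded.exists_norm_le
  have hR0 : 0 ≤ R := (norm_nonneg _).trans (hR 0 (interior_subset h0))
  obtain ⟨w, hwW, hw⟩ := W.exists_norm_eq_one_mem_orthogonal hW
  have hε : R * (r / (R + 1)) < r := by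
    rw [mul_div_assoc', div_lt_iff₀ (by positivity)]
    nlinarith
  have hcap : 0 < hm n (sph n ∩ Metric.ball w (r / (R + 1))) := by
    have := hausdorffMeasure_sphere_inter_ball_pos hw (ε := r / (R + 1)) (by positivity)
    rwa [finrank_euclideanSpace_fin] at this
  have hpos : 0 < hm n (rgi K (sph n \ (W : Set (E n)))) := hcap.trans_le <| measure_mono <|
    sph_inter_ball_subset_rgi_sph_diff hKcomp (interior_subset h0) hball hR hε hwW
  have hmeas : MeasurableSet (sph n \ (W : Set (E n))) :=
    Metric.isClosed_sphere.measurableSet.diff W.closed_of_finiteDimensional.measurableSet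
  exact ⟨hpos, pos_iff_ne_zero.2 fun hμ => hpos.ne' (h2 _ hmeas hμ)⟩

/-- necessity: if a finite Borel measure `μ` is the `L_p` Aleksandrov
integral curvature of a convex body `K` containing the origin in its interior, then `μ` cannot be
concentrated on any great subsphere. -/
theorem lp_aleksandrov_not_concentrated {n : ℕ} (hn : 2 ≤ n) (p : ℝ)
    (K : Set (E n)) (hKcomp : IsCompact K) (hKconv : Convex ℝ K) (h0 : 0 ∈ interior K)
    (μ : Measure (E n)) [IsFiniteMeasure μ]
    (h1 : ∀ v ∈ sph n, μ {v} = ENNReal.ofReal (radFn K v ^ p) * hm n (rgi K {v}))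
    (h2 : ∀ ω : Set (E n), MeasurableSet ω → μ ω = 0 → hm n (rgi K ω) = 0) :
    ∀ W : Submodule ℝ (E n), W ≠ ⊤ →
      0 < hm n (rgi K (sph n \ (W : Set (E n)))) ∧ 0 < μ (sph n \ (W : Set (E n))) :=
  lp_aleksandrov_not_concentrated_general K hKcomp h0 μ h2
end
end

section
/- Let n ≥ 2 and let u_1,…,u_N ∈ S^{n−1} be unit vectors that span ℝ^n. Let 1 ≤ s ≤ N−1 be such that S = span{u_1,…,u_s} is a proper subspace of ℝ^n. Define f : S^{n−1} → ℝ by f(v) = max_{s+1 ≤ i ≤ N} |v·u_i|. Then there exist constants c ∈ (0,1) and δ_0 ∈ (0,π/2) such that f(v) ≥ c for every v ∈ S^{n−1} whose angle φ(v) to S satisfies φ(v) > π/2 − δ_0. -/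
open MeasureTheory Real Filter
open scoped InnerProductSpace ENNReal Topology Pointwise

noncomputable section

/-! Since the `u i` span and those with `i < s` lie in `S`, the linear map
`w ↦ (⟪w, u i⟫)_{i ≥ s}` is injective on `Sᗮ`, hence bounded below there: some `|⟪w, u i⟫|` with
`i ≥ s` is at least `m ‖w‖`. If the angle of the unit vector `v` to `S` is close to `π / 2`, its
projection `P v` onto `S` is small, so `v - P v ∈ Sᗮ` has norm close to `1`, and replacing it by `v`
changes each `⟪·, u i⟫` by at most `‖P v‖`. -/

theorem Pi.exists_norm_eq {ι : Type*} {β : ι → Type*} [Fintype ι] [Nonempty ι]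
    [∀ i, SeminormedAddGroup (β i)] (f : ∀ i, β i) : ∃ i, ‖f‖ = ‖f i‖ := by
  obtain ⟨i, -, hi⟩ := Finset.univ.exists_mem_eq_sup Finset.univ_nonempty fun b => ‖f b‖₊
  exact ⟨i, congrArg NNReal.toReal ((Pi.nnnorm_def f).trans hi)⟩

theorem Submodule.exists_pos_mul_norm_le_abs_inner {F ι : Type*} [NormedAddCommGroup F]
    [InnerProductSpace ℝ F] [Fintype ι] (K : Submodule ℝ F) [FiniteDimensional ℝ K] (u : ι → F)
    (hK : ∀ w ∈ K, (∀ i, ⟪w, u i⟫_ℝ = 0) → w = 0) :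
    ∃ m > 0, ∀ w ∈ K, w ≠ 0 → ∃ i, m * ‖w‖ ≤ |⟪w, u i⟫_ℝ| := by
  let L : K →ₗ[ℝ] ι → ℝ := LinearMap.pi fun i => (innerₛₗ ℝ (u i)).comp K.subtype
  have hL (w : K) : L w = fun i => ⟪(w : F), u i⟫_ℝ := funext fun i => real_inner_comm _ _
  have hinj : Function.Injective L := by
    rw [← LinearMap.ker_eq_bot, LinearMap.ker_eq_bot']
    intro w hw
    exact Subtype.ext (hK w w.2 fun i => by simpa [hL] using congrFun hw i)
  obtain ⟨m, hm, hLm⟩ := antilipschitzWith_iff_exists_mul_le_norm.mp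
    ((L.injective_iff_antilipschitz.mp hinj).imp fun _ => And.right)
  refine ⟨m, hm, fun w hwK hw0 => ?_⟩
  obtain ⟨i, -⟩ : ∃ i, ⟪w, u i⟫_ℝ ≠ 0 := by
    by_contra! h
    exact hw0 (hK w hwK h)
  have : Nonempty ι := ⟨i⟩
  obtain ⟨j, hj⟩ := Pi.exists_norm_eq (L ⟨w, hwK⟩)
  refine ⟨j, ?_⟩
  have := hLm ⟨w, hwK⟩
  rw [hj, hL] at this
  simpa using this

theorem Submodule.eq_zero_of_forall_inner_eq_zero {F ι : Type*} [NormedAddCommGroup F]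
    [InnerProductSpace ℝ F] {u : ι → F} (hspan : Submodule.span ℝ (Set.range u) = ⊤) {w : F}
    (hw : ∀ i, ⟪w, u i⟫_ℝ = 0) : w = 0 := by
  have : (ℝ ∙ w) ⟂ ⊤ := by
    rw [← hspan, Submodule.isOrtho_span]
    rintro _ rfl _ ⟨i, rfl⟩
    exact hw i
  simpa using Submodule.isOrtho_top_right.mp this

theorem Real.lt_of_pi_div_two_sub_arcsin_lt_arccos {x t : ℝ} (h : π / 2 - arcsin t < arccos x) :
    x < t := by
  rw [arccos_eq_pi_div_two_sub_arcsin] at h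
  exact lt_of_not_ge fun hle => (monotone_arcsin hle).not_gt (by linarith)

theorem abs_real_inner_sub_le {F : Type*} [NormedAddCommGroup F] [InnerProductSpace ℝ F]
    {u : F} (hu : ‖u‖ = 1) (x y : F) : |⟪x - y, u⟫_ℝ| ≤ |⟪x, u⟫_ℝ| + ‖y‖ := by
  calc |⟪x - y, u⟫_ℝ| ≤ |⟪x, u⟫_ℝ| + |⟪y, u⟫_ℝ| := by rw [inner_sub_left]; exact abs_sub _ _
    _ ≤ |⟪x, u⟫_ℝ| + ‖y‖ := by
      gcongr
      simpa [hu] using abs_real_inner_le_norm y u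

theorem max_inner_lower_bound_general {n N : ℕ}
    (u : Fin N → E n) (hu : ∀ i, u i ∈ sph n)
    (hspan : Submodule.span ℝ (Set.range u) = ⊤)
    (s : ℕ)
    (S : Submodule ℝ (E n)) (hS : S = Submodule.span ℝ (u '' {i | (i : ℕ) < s})) :
    ∃ c ∈ Set.Ioo (0 : ℝ) 1, ∃ δ0 ∈ Set.Ioo (0 : ℝ) (π / 2),
      ∀ v ∈ sph n, π / 2 - δ0 < Real.arccos ‖(S.orthogonalProjection v : E n)‖ →
        ∃ i : Fin N, s ≤ (i : ℕ) ∧ c ≤ |⟪v, u i⟫_ℝ| := by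
  have horth (w) (hw : w ∈ Sᗮ) (h : ∀ i : {i : Fin N // s ≤ (i : ℕ)}, ⟪w, u i⟫_ℝ = 0) : w = 0 := by
    refine Submodule.eq_zero_of_forall_inner_eq_zero hspan fun i => ?_
    by_cases hi : s ≤ (i : ℕ)
    · exact h ⟨i, hi⟩
    · refine Submodule.inner_left_of_mem_orthogonal ?_ hw
      exact hS ▸ Submodule.subset_span ⟨i, not_le.mp hi, rfl⟩
  obtain ⟨m, hm, hmu⟩ := Sᗮ.exists_pos_mul_norm_le_abs_inner
    (fun i : {i : Fin N // s ≤ (i : ℕ)} => u i) horth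
  set a := min m 1
  have ha : 0 < a := lt_min hm one_pos
  have ha1 : a ≤ 1 := min_le_right _ _
  refine ⟨a / 2, ⟨by positivity, by linarith⟩, arcsin (a / 4),
    ⟨arcsin_pos.mpr (by positivity), arcsin_lt_pi_div_two.mpr (by linarith)⟩, fun v hv hang => ?_⟩
  rw [← Submodule.starProjection_apply] at hang
  set P := S.starProjection v
  have hP : ‖P‖ < a / 4 := lt_of_pi_div_two_sub_arcsin_lt_arccos hang
  have hw : 1 - a / 4 ≤ ‖v - P‖ := by
    have := norm_sub_norm_le v P
    rw [mem_sphere_zero_iff_norm.mp hv] at this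
    linarith
  obtain ⟨⟨i, hi⟩, hmi⟩ := hmu _ (S.sub_starProjection_mem_orthogonal v)
    (norm_pos_iff.mp (by linarith))
  refine ⟨i, hi, ?_⟩
  have hvi := abs_real_inner_sub_le (mem_sphere_zero_iff_norm.mp (hu i)) v P
  calc a / 2 ≤ a * (1 - a / 4) - a / 4 := by nlinarith
    _ ≤ m * ‖v - P‖ - ‖P‖ := by
      gcongr
      · linarith
      · exact min_le_left m 1
    _ ≤ |⟪v, u i⟫_ℝ| := by linarith

/-- Lemma 4.2: if `u_1,…,u_N` span `ℝ^n` and `S = span{u_1,…,u_s}` is a proper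
subspace, then `f(v) = max_{i > s} |v·u_i|` is bounded below by some `c ∈ (0,1)` for all unit
vectors `v` whose angle `φ(v)` to `S` exceeds `π/2 − δ₀`. -/
theorem max_inner_lower_bound {n N : ℕ} (hn : 2 ≤ n)
    (u : Fin N → E n) (hu : ∀ i, u i ∈ sph n)
    (hspan : Submodule.span ℝ (Set.range u) = ⊤)
    (s : ℕ) (hs1 : 1 ≤ s) (hs2 : s ≤ N - 1)
    (S : Submodule ℝ (E n)) (hS : S = Submodule.span ℝ (u '' {i | (i : ℕ) < s}))
    (hSproper : S ≠ ⊤) :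
    ∃ c ∈ Set.Ioo (0 : ℝ) 1, ∃ δ0 ∈ Set.Ioo (0 : ℝ) (π / 2),
      ∀ v ∈ sph n, π / 2 - δ0 < Real.arccos ‖(S.orthogonalProjection v : E n)‖ →
        ∃ i : Fin N, s ≤ (i : ℕ) ∧ c ≤ |⟪v, u i⟫_ℝ| :=
  max_inner_lower_bound_general u hu hspan s S hS
end
end

section
/- Let n ≥ 2, 1 ≤ k ≤ n−1, R ≥ 1, and c ∈ (0,1). For t ∈ (0,1) define g_1(t) = −log t · ∫_{arccos(ct/R)}^{π/2} cos^{k−1}φ sin^{n−k−1}φ dφ − log R · (arccos(ct/R) − arccos t) + ∫_{arccos t}^{π/2} log(cos φ) cos^{k−1}φ sin^{n−k−1}φ dφ. Then lim_{t→0^+} g_1(t) = 0. -/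
open MeasureTheory Real Filter
open scoped InnerProductSpace ENNReal Topology Pointwise

noncomputable section

open Asymptotics

/-!
The middle and last terms of `g₁` are continuous in `t` on all of `ℝ` and vanish at `t = 0`:
the last one because `log ∘ cos` is integrable on every bounded interval. For the first term,
the integrand is bounded by `1`, so the integral is `O(π/2 - arccos (a t)) = O(t)` since
`arccos` is differentiable at `0`, and `-log t · t → 0`.
-/

lemma norm_cos_pow_mul_sin_pow_le_one (a b : ℕ) (x : ℝ) : ‖cos x ^ a * sin x ^ b‖ ≤ 1 := by
  rw [norm_mul, norm_pow, norm_pow]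
  exact mul_le_one₀ (pow_le_one₀ (norm_nonneg _) (abs_cos_le_one x)) (by positivity)
    (pow_le_one₀ (norm_nonneg _) (abs_sin_le_one x))

lemma isBigO_integral_arccos_mul {F : Type*} [NormedAddCommGroup F] [NormedSpace ℝ F]
    {f : ℝ → F} {C : ℝ} (hf : ∀ x, ‖f x‖ ≤ C) (a : ℝ) :
    (fun t => ∫ x in arccos (a * t)..π / 2, f x) =O[𝓝 0] id := by
  have hlin : (fun t => arccos (a * t) - π / 2) =O[𝓝 0] id := by
    have hderiv := (hasDerivAt_arccos (x := a * 0) (by simp) (by simp)).comp 0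
      ((hasDerivAt_id' 0).const_mul a)
    have := hderiv.isBigO_sub
    simp only [Function.comp_def, mul_zero, arccos_zero, sub_zero] at this
    exact this
  refine IsBigO.trans (IsBigO.of_bound C (Eventually.of_forall fun t => ?_)) hlin
  rw [Real.norm_eq_abs, abs_sub_comm]
  exact intervalIntegral.norm_integral_le_of_norm_le_const fun x _ => hf x

lemma tendsto_neg_log_mul_of_isBigO_id {g : ℝ → ℝ} (hg : g =O[𝓝 0] id) :
    Tendsto (fun t => -log t * g t) (𝓝[>] 0) (𝓝 0) := by
  have hlog : Tendsto (fun t => -log t * t) (𝓝[>] 0) (𝓝 0) := by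
    simpa [mul_comm] using (continuous_mul_log.tendsto 0).neg.mono_left nhdsWithin_le_nhds
  exact ((isBigO_refl (fun t => -log t) _).mul (hg.mono nhdsWithin_le_nhds)).trans_tendsto hlog

lemma continuous_integral_arccos {F : Type*} [NormedAddCommGroup F] [NormedSpace ℝ F]
    {f : ℝ → F} (hf : ∀ a b, IntervalIntegrable f volume a b) :
    Continuous fun t => ∫ x in arccos t..π / 2, f x := by
  simp_rw [intervalIntegral.integral_symm (π / 2)]
  exact ((intervalIntegral.continuous_primitive hf _).comp continuous_arccos).neg

theorem g1_tendsto_zero_general (n k : ℕ) (R : ℝ) (c : ℝ) :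
    Tendsto (fun t : ℝ =>
        -Real.log t *
            (∫ φ in Real.arccos (c * t / R)..(π / 2),
              Real.cos φ ^ (k - 1) * Real.sin φ ^ (n - k - 1)) -
          Real.log R * (Real.arccos (c * t / R) - Real.arccos t) +
          ∫ φ in Real.arccos t..(π / 2),
            Real.log (Real.cos φ) * (Real.cos φ ^ (k - 1) * Real.sin φ ^ (n - k - 1)))
      (𝓝[>] (0 : ℝ)) (𝓝 0) := by
  have hfirst := tendsto_neg_log_mul_of_isBigO_id
    (isBigO_integral_arccos_mul (norm_cos_pow_mul_sin_pow_le_one (k - 1) (n - k - 1)) (c / R))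
  have hrest : Continuous fun t =>
      -(Real.log R * (Real.arccos (c / R * t) - Real.arccos t)) +
        ∫ φ in Real.arccos t..(π / 2),
          Real.log (Real.cos φ) * (Real.cos φ ^ (k - 1) * Real.sin φ ^ (n - k - 1)) := by
    refine Continuous.add (by fun_prop) (continuous_integral_arccos fun a b => ?_)
    exact intervalIntegrable_log_cos.mul_continuousOn (by fun_prop)
  have := hfirst.add ((hrest.tendsto' 0 0 (by simp)).mono_left nhdsWithin_le_nhds)
  simpa only [mul_div_right_comm, sub_eq_add_neg, add_assoc, add_zero] using this

/-- the calculus fact `g₁(t) → 0` as `t → 0⁺`. -/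
theorem g1_tendsto_zero (n k : ℕ) (hn : 2 ≤ n) (hk1 : 1 ≤ k) (hk2 : k ≤ n - 1)
    (R : ℝ) (hR : 1 ≤ R) (c : ℝ) (hc : c ∈ Set.Ioo (0 : ℝ) 1) :
    Tendsto (fun t : ℝ =>
        -Real.log t *
            (∫ φ in Real.arccos (c * t / R)..(π / 2),
              Real.cos φ ^ (k - 1) * Real.sin φ ^ (n - k - 1)) -
          Real.log R * (Real.arccos (c * t / R) - Real.arccos t) +
          ∫ φ in Real.arccos t..(π / 2),
            Real.log (Real.cos φ) * (Real.cos φ ^ (k - 1) * Real.sin φ ^ (n - k - 1)))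
      (𝓝[>] (0 : ℝ)) (𝓝 0) :=
  g1_tendsto_zero_general n k R c
end
end

section
/- Let n ≥ 2, 1 ≤ k ≤ n−1, R ≥ 1, c ∈ (0,1), a > 0, b > 0, and p ∈ (−1,0). For t ∈ (0,1) define g_1(t) = −log t · ∫_{arccos(ct/R)}^{π/2} cos^{k−1}φ sin^{n−k−1}φ dφ − log R · (arccos(ct/R) − arccos t) + ∫_{arccos t}^{π/2} log(cos φ) cos^{k−1}φ sin^{n−k−1}φ dφ, and g_2(t) = −(1/p) log((a + b t^{−p})/a). Then there exists t_0 ∈ (0,1) such that (kω_k (n−k)ω_{n−k} / (nω_n)) · g_1(t_0) + g_2(t_0) > 0, where ω_m denotes the volume of the m-dimensional unit ball. -/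
open MeasureTheory Real Filter
open scoped InnerProductSpace ENNReal Topology Pointwise

noncomputable section

lemma aux_neg_log_le {x ε : ℝ} (hε : 0 < ε) (hx : 0 < x) : -Real.log x ≤ x ^ (-ε) / ε := by
  have h1 : Real.log (x ^ (-ε)) ≤ x ^ (-ε) - 1 :=
    Real.log_le_sub_one_of_pos (Real.rpow_pos_of_pos hx _)
  rw [Real.log_rpow hx] at h1
  have h2 : (0:ℝ) < x ^ (-ε) := Real.rpow_pos_of_pos hx _
  rw [le_div_iff₀ hε]
  nlinarith

lemma aux_log_one_add {u : ℝ} (h0 : 0 ≤ u) (h1 : u ≤ 1) : u / 2 ≤ Real.log (1 + u) := by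
  have hpos : (0:ℝ) < 1 + u := by linarith
  have h2 : Real.log (1 + u)⁻¹ ≤ (1 + u)⁻¹ - 1 := Real.log_le_sub_one_of_pos (by positivity)
  rw [Real.log_inv] at h2
  have h3 : (1 + u)⁻¹ * (1 + u) = 1 := inv_mul_cancel₀ hpos.ne'
  nlinarith [mul_nonneg h0 (by linarith : (0:ℝ) ≤ 1 - u)]

lemma aux_arcsin_le {t : ℝ} (h0 : 0 ≤ t) (h1 : t ≤ 1) : Real.arcsin t ≤ π / 2 * t := by
  have hπ := Real.pi_pos
  rw [Real.arcsin_le_iff_le_sin ⟨by linarith, h1⟩ ⟨by nlinarith, by nlinarith⟩]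
  have h := Real.mul_le_sin (x := π / 2 * t) (by positivity) (by nlinarith)
  calc t = 2 / π * (π / 2 * t) := by field_simp
    _ ≤ _ := h

lemma aux_term3 (m l : ℕ) {t ε : ℝ} (ht0 : 0 < t) (ht1 : t ≤ 1) (hε0 : 0 < ε) (hε1 : ε < 1) :
    -(1/ε * (π/2)^ε / (1-ε) * ((π/2) * t) ^ (1-ε)) ≤
      ∫ φ in Real.arccos t..(π/2),
        Real.log (Real.cos φ) * (Real.cos φ ^ m * Real.sin φ ^ l) := by
  have hπ := Real.pi_pos
  set A := Real.arccos t with hA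
  have hA0 : 0 ≤ A := Real.arccos_nonneg t
  have hAB : A ≤ π/2 := Real.arccos_le_pi_div_two.2 ht0.le
  set f : ℝ → ℝ := fun φ => Real.log (Real.cos φ) * (Real.cos φ ^ m * Real.sin φ ^ l) with hf
  set g : ℝ → ℝ := fun φ => 1/ε * (π/2)^ε * (π/2 - φ) ^ (-ε) with hg
  have hpt : ∀ φ ∈ Set.Icc A (π/2), |f φ| ≤ g φ := by
    intro φ hφ
    obtain ⟨h1, h2⟩ := hφ
    have hφ0 : 0 ≤ φ := le_trans hA0 h1
    have hcos0 : 0 ≤ Real.cos φ := Real.cos_nonneg_of_mem_Icc ⟨by linarith, h2⟩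
    have hcos1 : Real.cos φ ≤ 1 := Real.cos_le_one φ
    have hsin0 : 0 ≤ Real.sin φ := Real.sin_nonneg_of_nonneg_of_le_pi hφ0 (by linarith)
    have hsin1 : Real.sin φ ≤ 1 := Real.sin_le_one φ
    have hgpos : 0 ≤ g φ := by
      have h3 : (0:ℝ) ≤ (π/2 - φ) ^ (-ε) := Real.rpow_nonneg (by linarith) _
      have h4 : (0:ℝ) ≤ (π/2 : ℝ)^ε := Real.rpow_nonneg (by linarith) _
      rw [hg]
      positivity
    rcases eq_or_lt_of_le h2 with heq | hlt
    · have hc0 : Real.cos φ = 0 := by rw [heq]; exact Real.cos_pi_div_two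
      have : f φ = 0 := by simp [hf, hc0]
      rw [this, abs_zero]; exact hgpos
    · have hcpos : 0 < Real.cos φ := Real.cos_pos_of_mem_Ioo ⟨by linarith, hlt⟩
      have hb1 : |f φ| ≤ -Real.log (Real.cos φ) := by
        rw [hf, abs_mul]
        have hlog : Real.log (Real.cos φ) ≤ 0 := Real.log_nonpos hcos0 hcos1
        have habs2 : |Real.cos φ ^ m * Real.sin φ ^ l| ≤ 1 := by
          rw [abs_of_nonneg (by positivity)]
          exact mul_le_one₀ (pow_le_one₀ hcos0 hcos1) (by positivity) (pow_le_one₀ hsin0 hsin1)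
        calc |Real.log (Real.cos φ)| * |Real.cos φ ^ m * Real.sin φ ^ l|
            ≤ |Real.log (Real.cos φ)| * 1 := by
              exact mul_le_mul_of_nonneg_left habs2 (abs_nonneg _)
          _ = -Real.log (Real.cos φ) := by rw [mul_one, abs_of_nonpos hlog]
      have hlb : 2/π * (π/2 - φ) ≤ Real.cos φ := by
        have := Real.one_sub_mul_le_cos hφ0 h2
        have heq2 : 2/π * (π/2 - φ) = 1 - 2/π * φ := by field_simp
        linarith
      have hlbpos : 0 < 2/π * (π/2 - φ) := by
        have : 0 < π/2 - φ := by linarith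
        positivity
      have hchain1 : (Real.cos φ) ^ (-ε) ≤ (2/π * (π/2 - φ)) ^ (-ε) :=
        Real.rpow_le_rpow_of_nonpos hlbpos hlb (by linarith)
      have hchain2 : (2/π * (π/2 - φ)) ^ (-ε) = (π/2)^ε * (π/2 - φ) ^ (-ε) := by
        rw [Real.mul_rpow (by positivity) (by linarith)]
        congr 1
        rw [show (2/π:ℝ) = (π/2)⁻¹ from (inv_div π 2).symm,
          Real.inv_rpow (by positivity), Real.rpow_neg (by positivity), inv_inv]
      calc |f φ| ≤ -Real.log (Real.cos φ) := hb1
        _ ≤ (Real.cos φ) ^ (-ε) / ε := aux_neg_log_le hε0 hcpos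
        _ ≤ (2/π * (π/2 - φ)) ^ (-ε) / ε := by gcongr
        _ = g φ := by rw [hchain2, hg]; ring
  have hgint : IntervalIntegrable g volume A (π/2) := by
    have h1 : IntervalIntegrable (fun x : ℝ => x ^ (-ε)) volume (π/2 - A) 0 :=
      intervalIntegral.intervalIntegrable_rpow' (by linarith)
    have h2 := h1.comp_sub_left (π/2)
    have h3 : IntervalIntegrable (fun x : ℝ => (π/2 - x) ^ (-ε)) volume A (π/2) := by
      simpa using h2
    exact h3.const_mul _
  have hfmeas : Measurable f := by
    exact (Real.measurable_log.comp Real.continuous_cos.measurable).mul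
      (((Real.continuous_cos.pow m).mul (Real.continuous_sin.pow l)).measurable)
  have hfint : IntervalIntegrable f volume A (π/2) := by
    refine hgint.mono_fun hfmeas.aestronglyMeasurable ?_
    rw [Set.uIoc_of_le hAB]
    refine MeasureTheory.ae_restrict_of_forall_mem measurableSet_Ioc fun x hx => ?_
    have hx' : x ∈ Set.Icc A (π/2) := ⟨hx.1.le, hx.2⟩
    simp only [Real.norm_eq_abs]
    exact le_trans (hpt x hx') (le_abs_self _)
  have hmono : ∫ φ in A..(π/2), (-g φ) ≤ ∫ φ in A..(π/2), f φ := by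
    refine intervalIntegral.integral_mono_on hAB hgint.neg hfint fun x hx => ?_
    have := hpt x hx
    have := abs_le.1 this
    linarith [this.1]
  rw [intervalIntegral.integral_neg] at hmono
  have hcalc : ∫ φ in A..(π/2), g φ = 1/ε*(π/2)^ε * ((π/2 - A)^(1-ε)/(1-ε)) := by
    rw [hg]
    rw [intervalIntegral.integral_const_mul]
    congr 1
    rw [intervalIntegral.integral_comp_sub_left (fun x => x ^ (-ε)) (π/2)]
    rw [show π/2 - π/2 = (0:ℝ) by ring]
    rw [integral_rpow (Or.inl (by linarith))]
    rw [show -ε + 1 = 1 - ε from by ring]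
    rw [Real.zero_rpow (by linarith : (1:ℝ) - ε ≠ 0)]
    ring
  have hramp : (π/2 - A)^(1-ε) ≤ ((π/2)*t)^(1-ε) := by
    have hAe : π/2 - A = Real.arcsin t := by
      rw [hA, Real.arccos_eq_pi_div_two_sub_arcsin]; ring
    rw [hAe]
    exact Real.rpow_le_rpow (Real.arcsin_nonneg.2 ht0.le) (aux_arcsin_le ht0.le ht1)
      (by linarith)
  have hfinal : ∫ φ in A..(π/2), g φ ≤ 1/ε * (π/2)^ε / (1-ε) * ((π/2)*t)^(1-ε) := by
    have hc0 : (0:ℝ) ≤ 1/ε * (π/2)^ε := by positivity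
    have h1ε : (0:ℝ) < 1 - ε := by linarith
    rw [hcalc]
    calc 1/ε*(π/2)^ε * ((π/2 - A)^(1-ε)/(1-ε))
        ≤ 1/ε*(π/2)^ε * ((π/2*t)^(1-ε)/(1-ε)) := by gcongr
      _ = 1/ε * (π/2)^ε / (1-ε) * ((π/2)*t)^(1-ε) := by ring
  linarith


/-- for `-1 < p < 0` there is `t₀ ∈ (0,1)` at which the combination
`(kω_k(n−k)ω_{n−k}/(nω_n))·g₁(t₀) + g₂(t₀)` is strictly positive. -/
theorem g1_g2_positive_somewhere (n k : ℕ) (hn : 2 ≤ n) (hk1 : 1 ≤ k) (hk2 : k ≤ n - 1)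
    (R : ℝ) (hR : 1 ≤ R) (c : ℝ) (hc : c ∈ Set.Ioo (0 : ℝ) 1)
    (a b : ℝ) (ha : 0 < a) (hb : 0 < b) (p : ℝ) (hp : p ∈ Set.Ioo (-1 : ℝ) 0) :
    ∃ t0 ∈ Set.Ioo (0 : ℝ) 1,
      0 < (k * ballVol k * ((n - k : ℕ) : ℝ) * ballVol (n - k) / (n * ballVol n)) *
            (-Real.log t0 *
                (∫ φ in Real.arccos (c * t0 / R)..(π / 2),
                  Real.cos φ ^ (k - 1) * Real.sin φ ^ (n - k - 1)) -
              Real.log R * (Real.arccos (c * t0 / R) - Real.arccos t0) +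
              ∫ φ in Real.arccos t0..(π / 2),
                Real.log (Real.cos φ) * (Real.cos φ ^ (k - 1) * Real.sin φ ^ (n - k - 1))) +
          -(1 / p) * Real.log ((a + b * t0 ^ (-p)) / a) := by
  obtain ⟨hp1, hp2⟩ := hp
  obtain ⟨hc0, hc1⟩ := hc
  have hπ := Real.pi_pos
  set ε : ℝ := (1 + p) / 2 with hεdef
  have hε0 : 0 < ε := by rw [hεdef]; linarith
  have hε1 : ε < 1 := by rw [hεdef]; linarith
  set coef : ℝ := (k * ballVol k * ((n - k : ℕ) : ℝ) * ballVol (n - k) / (n * ballVol n))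
    with hcoef
  have hcoef0 : 0 ≤ coef := by
    rw [hcoef]
    have h1 : 0 ≤ ballVol k := ENNReal.toReal_nonneg
    have h2 : 0 ≤ ballVol (n - k) := ENNReal.toReal_nonneg
    have h3 : 0 ≤ ballVol n := ENNReal.toReal_nonneg
    positivity
  set C : ℝ := Real.log R * (π / 2) with hCdef
  set D : ℝ := 1 / ε * (π / 2) ^ ε / (1 - ε) * (π / 2) ^ (1 - ε) with hDdef
  set M : ℝ := -(1 / p) * (b / a) / 2 with hMdef
  have hq : (0:ℝ) < -(1 / p) := by
    rw [neg_pos]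
    exact one_div_neg.2 hp2
  have hM0 : 0 < M := by rw [hMdef]; positivity
  set l := 𝓝[>] (0 : ℝ) with hl
  have hid : Tendsto (fun t : ℝ => t) l (𝓝 0) := Filter.tendsto_id.mono_right nhdsWithin_le_nhds
  have hpow : ∀ s : ℝ, 0 < s → Tendsto (fun t : ℝ => t ^ s) l (𝓝 0) := by
    intro s hs
    have hcont : ContinuousAt (fun x : ℝ => x ^ s) 0 :=
      Real.continuousAt_rpow_const 0 s (Or.inr hs.le)
    have h2 := hcont.tendsto
    rw [Real.zero_rpow hs.ne'] at h2
    exact h2.mono_left nhdsWithin_le_nhds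
  have e0 : ∀ᶠ t in l, t ∈ Set.Ioi (0:ℝ) := eventually_mem_nhdsWithin
  have e1 : ∀ᶠ t in l, t < 1 := hid.eventually_lt_const one_pos
  have e2 : ∀ᶠ t in l, b / a * t ^ (-p) ≤ 1 := by
    have h1 : Tendsto (fun t : ℝ => b / a * t ^ (-p)) l (𝓝 (b / a * 0)) :=
      (hpow (-p) (by linarith)).const_mul _
    rw [mul_zero] at h1
    exact h1.eventually_le_const one_pos
  have e3 : ∀ᶠ t in l, coef * C * t ^ (1 + p) + coef * D * t ^ ((1 - ε) + p) < M := by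
    have h1 : Tendsto (fun t : ℝ => coef * C * t ^ (1 + p) + coef * D * t ^ ((1 - ε) + p)) l
        (𝓝 (coef * C * 0 + coef * D * 0)) :=
      ((hpow (1 + p) (by linarith)).const_mul _).add
        ((hpow ((1 - ε) + p) (by rw [hεdef]; linarith)).const_mul _)
    rw [mul_zero, mul_zero, add_zero] at h1
    exact h1.eventually_lt_const hM0
  obtain ⟨t, ht0', ht1, he2, he3⟩ := (e0.and (e1.and (e2.and e3))).exists
  have ht0 : 0 < t := ht0'
  refine ⟨t, ⟨ht0, ht1⟩, ?_⟩
  have harc_le : Real.arccos (c * t / R) ≤ π / 2 :=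
    Real.arccos_le_pi_div_two.2 (by positivity)
  -- term 1
  have hT1 : 0 ≤ -Real.log t *
      (∫ φ in Real.arccos (c * t / R)..(π / 2),
        Real.cos φ ^ (k - 1) * Real.sin φ ^ (n - k - 1)) := by
    apply mul_nonneg
    · rw [neg_nonneg]; exact Real.log_nonpos ht0.le ht1.le
    · apply intervalIntegral.integral_nonneg harc_le
      intro u hu
      have hu0 : 0 ≤ u := le_trans (Real.arccos_nonneg _) hu.1
      have hu2 : u ≤ π / 2 := hu.2
      have hcos := Real.cos_nonneg_of_mem_Icc (Set.mem_Icc.2 ⟨by linarith, hu.2⟩)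
      have hsin := Real.sin_nonneg_of_nonneg_of_le_pi hu0 (by linarith)
      positivity
  -- term 2
  have hT2a : Real.arccos t ≤ Real.arccos (c * t / R) := by
    have hle : c * t / R ≤ t := by
      rw [div_le_iff₀ (by linarith : (0:ℝ) < R)]
      nlinarith
    rw [Real.arccos_eq_pi_div_two_sub_arcsin, Real.arccos_eq_pi_div_two_sub_arcsin]
    have := Real.monotone_arcsin hle
    linarith
  have hT2b : Real.arccos (c * t / R) - Real.arccos t ≤ π / 2 * t := by
    have h1 : π / 2 - Real.arccos t = Real.arcsin t := by
      rw [Real.arccos_eq_pi_div_two_sub_arcsin]; ring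
    have h2 := aux_arcsin_le ht0.le ht1.le
    linarith
  have hlogR : 0 ≤ Real.log R := Real.log_nonneg hR
  have hT2 : -(C * t) ≤ -(Real.log R * (Real.arccos (c * t / R) - Real.arccos t)) := by
    have h1 := mul_le_mul_of_nonneg_left hT2b hlogR
    rw [hCdef]
    nlinarith
  -- term 3
  have hT3 := aux_term3 (k - 1) (n - k - 1) ht0 ht1.le hε0 hε1
  have hmulr : ((π / 2) * t : ℝ) ^ (1 - ε) = (π / 2) ^ (1 - ε) * t ^ (1 - ε) :=
    Real.mul_rpow (by positivity) ht0.le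
  have hT3' : -(D * t ^ (1 - ε)) ≤
      ∫ φ in Real.arccos t..(π / 2),
        Real.log (Real.cos φ) * (Real.cos φ ^ (k - 1) * Real.sin φ ^ (n - k - 1)) := by
    have heq : D * t ^ (1 - ε) = 1 / ε * (π / 2) ^ ε / (1 - ε) * ((π / 2) * t) ^ (1 - ε) := by
      rw [hmulr, hDdef]; ring
    rw [heq]
    exact hT3
  -- combine g1
  have hG1 : -(C * t + D * t ^ (1 - ε)) ≤
      -Real.log t *
          (∫ φ in Real.arccos (c * t / R)..(π / 2),
            Real.cos φ ^ (k - 1) * Real.sin φ ^ (n - k - 1)) -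
        Real.log R * (Real.arccos (c * t / R) - Real.arccos t) +
        ∫ φ in Real.arccos t..(π / 2),
          Real.log (Real.cos φ) * (Real.cos φ ^ (k - 1) * Real.sin φ ^ (n - k - 1)) := by
    linarith
  have hcoefmul := mul_le_mul_of_nonneg_left hG1 hcoef0
  have hring : coef * -(C * t + D * t ^ (1 - ε)) = -(coef * C * t + coef * D * t ^ (1 - ε)) := by
    ring
  rw [hring] at hcoefmul
  -- g2
  have hx0 : (0:ℝ) < t ^ (-p) := Real.rpow_pos_of_pos ht0 _
  have hdiv : (a + b * t ^ (-p)) / a = 1 + b / a * t ^ (-p) := by field_simp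
  have hu0 : 0 ≤ b / a * t ^ (-p) := by positivity
  have hlog2 : (b / a * t ^ (-p)) / 2 ≤ Real.log ((a + b * t ^ (-p)) / a) := by
    rw [hdiv]; exact aux_log_one_add hu0 he2
  have hg2 : M * t ^ (-p) ≤ -(1 / p) * Real.log ((a + b * t ^ (-p)) / a) := by
    calc M * t ^ (-p) = -(1 / p) * ((b / a * t ^ (-p)) / 2) := by rw [hMdef]; ring
      _ ≤ _ := mul_le_mul_of_nonneg_left hlog2 hq.le
  -- key strict inequality
  have key : (coef * C * t ^ (1 + p) + coef * D * t ^ ((1 - ε) + p)) * t ^ (-p) =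
      coef * C * t + coef * D * t ^ (1 - ε) := by
    have ee1 : t ^ (1 + p) * t ^ (-p) = t := by
      rw [← Real.rpow_add ht0, show 1 + p + -p = (1:ℝ) by ring, Real.rpow_one]
    have ee2 : t ^ ((1 - ε) + p) * t ^ (-p) = t ^ (1 - ε) := by
      rw [← Real.rpow_add ht0, show (1 - ε) + p + -p = 1 - ε by ring]
    calc (coef * C * t ^ (1 + p) + coef * D * t ^ ((1 - ε) + p)) * t ^ (-p)
        = coef * C * (t ^ (1 + p) * t ^ (-p)) + coef * D * (t ^ ((1 - ε) + p) * t ^ (-p)) := by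
          ring
      _ = _ := by rw [ee1, ee2]
  have hlt : coef * C * t + coef * D * t ^ (1 - ε) < M * t ^ (-p) := by
    rw [← key]
    exact mul_lt_mul_of_pos_right he3 hx0
  linarith
end
end
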